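/- arXiv:2001.07498 — 2 statements merged into one kernel-verified Lean document; each statement's English description precedes it below -/
import Mathlib

section
/- Every Moufang cocycle θ ∈ Z²(M³₀₁,ℂ) can be written uniquely as θ = β₁Δ₁₁ + β₂(Δ₁₂ + Δ₂₁) + α(Δ₁₃ + Δ₂₂ + Δ₃₁) with β₁, β₂, α ∈ ℂ; in particular, the quotient H²(M³₀₁,ℂ) = Z²(M³₀₁,ℂ)/B²(M³₀₁,ℂ) is one-dimensional, spanned by the class of Δ₁₃ + Δ₂₂ + Δ₃₁. -/
/-- The multiplication of the algebra `M³₀₁` on `ℂ³` (basis `e₁ = coord 0`, `e₂ = coord 1`,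
`e₃ = coord 2`), determined bilinearly by `e₁e₁ = e₂`, `e₁e₂ = e₃`, `e₂e₁ = e₃`. -/
def m301mul (x y : Fin 3 → ℂ) : Fin 3 → ℂ :=
  ![0, x 0 * y 0, x 0 * y 1 + x 1 * y 0]

/-- The bilinear form `Δᵢⱼ` on `ℂ³` with `Δᵢⱼ(e_l, e_k) = δᵢl·δⱼk`. -/
noncomputable def delta3 (i j : Fin 3) : (Fin 3 → ℂ) →ₗ[ℂ] (Fin 3 → ℂ) →ₗ[ℂ] ℂ :=
  LinearMap.mk₂ ℂ (fun x y => x i * y j)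
    (fun m₁ m₂ n => by simp [add_mul])
    (fun c m n => by simp only [Pi.smul_apply, smul_eq_mul]; ring)
    (fun m n₁ n₂ => by simp [mul_add])
    (fun c m n => by simp only [Pi.smul_apply, smul_eq_mul]; ring)

/-- The four Moufang cocycle conditions for a bilinear form `θ` with respect to a
multiplication `m` on `ℂ³`. -/
def IsMoufangCocycleOn (m : (Fin 3 → ℂ) → (Fin 3 → ℂ) → (Fin 3 → ℂ))
    (θ : (Fin 3 → ℂ) →ₗ[ℂ] (Fin 3 → ℂ) →ₗ[ℂ] ℂ) : Prop :=
  (∀ x y z, θ (m x y) z - θ x (m y z) + θ (m z y) x - θ z (m y x) = 0) ∧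
  (∀ x y z t, θ (m (m x y) z) t + θ (m (m z y) x) t = θ x (m y (m z t)) + θ z (m y (m x t))) ∧
  (∀ x y z t, θ t (m x (m y z)) + θ t (m z (m y x)) = θ (m (m t x) y) z + θ (m (m t z) y) x) ∧
  (∀ x y z t, θ (m x y) (m t z) + θ (m z y) (m t x) = θ (m x (m y t)) z + θ (m z (m y t)) x)

/-!
Writing `e₁, e₂, e₃` for `t, t², t³`, the algebra `M³₀₁` is `t ℂ[t] / (t⁴)`. Specialising the
Moufang identities to basis vectors shows that a cocycle is a Hankel form: `θ(eᵢ, eⱼ)` depends only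
on `i + j` and vanishes for `i + j ≥ 5`, which leaves the three parameters `β₁, β₂, α`. The
`β`-part is `f(xy)` with `f` reading off the `e₂`- and `e₃`-coordinates of the product, while
`Δ₁₃ + Δ₂₂ + Δ₃₁` is not a coboundary since it is nonzero at `(e₁, e₃)` although `e₁e₃ = 0`.
-/

@[simp]
theorem m301mul_single_zero_single_zero :
    m301mul (Pi.single 0 1) (Pi.single 0 1) = Pi.single 1 1 := by
  funext k; fin_cases k <;> simp [m301mul]

@[simp]
theorem m301mul_single_zero_single_one :
    m301mul (Pi.single 0 1) (Pi.single 1 1) = Pi.single 2 1 := by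
  funext k; fin_cases k <;> simp [m301mul]

@[simp]
theorem m301mul_single_one_single_zero :
    m301mul (Pi.single 1 1) (Pi.single 0 1) = Pi.single 2 1 := by
  funext k; fin_cases k <;> simp [m301mul]

@[simp]
theorem m301mul_single_single_of_two_le {i j : Fin 3} (h : 2 ≤ i.val + j.val) :
    m301mul (Pi.single i 1) (Pi.single j 1) = 0 := by
  fin_cases i <;> fin_cases j <;> funext k <;> fin_cases k <;> simp_all [m301mul]

@[simp]
theorem delta3_apply (i j : Fin 3) (x y : Fin 3 → ℂ) : delta3 i j x y = x i * y j := rfl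

/-- The bilinear form `β₁Δ₁₁ + β₂(Δ₁₂ + Δ₂₁) + α(Δ₁₃ + Δ₂₂ + Δ₃₁)` for `b = (β₁, β₂, α)`. -/
noncomputable def m301Form (b : ℂ × ℂ × ℂ) : (Fin 3 → ℂ) →ₗ[ℂ] (Fin 3 → ℂ) →ₗ[ℂ] ℂ :=
  b.1 • delta3 0 0 + b.2.1 • (delta3 0 1 + delta3 1 0) +
    b.2.2 • (delta3 0 2 + delta3 1 1 + delta3 2 0)

theorem m301Form_apply (b : ℂ × ℂ × ℂ) (x y : Fin 3 → ℂ) :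
    m301Form b x y = b.1 * (x 0 * y 0) + b.2.1 * (x 0 * y 1 + x 1 * y 0) +
      b.2.2 * (x 0 * y 2 + x 1 * y 1 + x 2 * y 0) := rfl

theorem m301Form_injective : Function.Injective m301Form := by
  intro b b' h
  have h₁ : b.1 = b'.1 := by
    simpa [m301Form_apply] using LinearMap.congr_fun₂ h (Pi.single 0 1) (Pi.single 0 1)
  have h₂ : b.2.1 = b'.2.1 := by
    simpa [m301Form_apply] using LinearMap.congr_fun₂ h (Pi.single 0 1) (Pi.single 1 1)
  have h₃ : b.2.2 = b'.2.2 := by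
    simpa [m301Form_apply] using LinearMap.congr_fun₂ h (Pi.single 0 1) (Pi.single 2 1)
  exact Prod.ext h₁ (Prod.ext h₂ h₃)

theorem m301Form_apply_eq_smul_add_coboundary (b : ℂ × ℂ × ℂ) (x y : Fin 3 → ℂ) :
    m301Form b x y = b.2.2 * (delta3 0 2 + delta3 1 1 + delta3 2 0) x y +
      (b.1 • LinearMap.proj 1 + b.2.1 • LinearMap.proj 2 : (Fin 3 → ℂ) →ₗ[ℂ] ℂ) (m301mul x y) := by
  simp only [m301Form_apply, m301mul, LinearMap.add_apply, LinearMap.smul_apply, delta3_apply,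
    LinearMap.coe_proj, Function.eval, Matrix.cons_val_zero, Matrix.cons_val_one, Matrix.cons_val,
    smul_eq_mul]
  ring

namespace IsMoufangCocycleOn

variable {θ : (Fin 3 → ℂ) →ₗ[ℂ] (Fin 3 → ℂ) →ₗ[ℂ] ℂ}

theorem m301_apply_single_eq (hθ : IsMoufangCocycleOn m301mul θ) :
    θ (Pi.single 1 1) (Pi.single 0 1) = θ (Pi.single 0 1) (Pi.single 1 1) ∧
    θ (Pi.single 2 1) (Pi.single 0 1) = θ (Pi.single 0 1) (Pi.single 2 1) ∧
    θ (Pi.single 1 1) (Pi.single 1 1) = θ (Pi.single 0 1) (Pi.single 2 1) ∧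
    θ (Pi.single 1 1) (Pi.single 2 1) = 0 ∧
    θ (Pi.single 2 1) (Pi.single 1 1) = 0 ∧
    θ (Pi.single 2 1) (Pi.single 2 1) = 0 := by
  obtain ⟨h1, -, -, h4⟩ := hθ
  have e000 := h1 (Pi.single 0 1) (Pi.single 0 1) (Pi.single 0 1)
  have e001 := h1 (Pi.single 0 1) (Pi.single 0 1) (Pi.single 1 1)
  have e002 := h1 (Pi.single 0 1) (Pi.single 0 1) (Pi.single 2 1)
  have f0000 := h4 (Pi.single 0 1) (Pi.single 0 1) (Pi.single 0 1) (Pi.single 0 1)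
  have f0010 := h4 (Pi.single 0 1) (Pi.single 0 1) (Pi.single 1 1) (Pi.single 0 1)
  have f0011 := h4 (Pi.single 0 1) (Pi.single 0 1) (Pi.single 1 1) (Pi.single 1 1)
  simp only [Fin.isValue, m301mul_single_zero_single_zero, m301mul_single_zero_single_one,
    m301mul_single_one_single_zero, m301mul_single_single_of_two_le, Fin.coe_ofNat_eq_mod,
    Nat.zero_mod, Nat.mod_succ, Nat.one_mod, Nat.reduceAdd, Nat.reduceLeDiff, zero_add, le_refl,
    map_zero, sub_zero, add_zero, LinearMap.zero_apply, add_eq_right]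
    at e000 e001 e002 f0000 f0010 f0011
  refine ⟨?_, ?_, ?_, ?_, ?_, ?_⟩
  · linear_combination e000 / 2
  · linear_combination e001
  · linear_combination f0000 / 2 + e001
  · linear_combination f0010
  · linear_combination f0010 - e002
  · linear_combination f0011

theorem eq_m301Form (hθ : IsMoufangCocycleOn m301mul θ) :
    θ = m301Form (θ (Pi.single 0 1) (Pi.single 0 1), θ (Pi.single 0 1) (Pi.single 1 1),
      θ (Pi.single 0 1) (Pi.single 2 1)) := by
  obtain ⟨h10, h20, h11, h12, h21, h22⟩ := hθ.m301_apply_single_eq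
  refine LinearMap.ext_basis (Pi.basisFun ℂ (Fin 3)) (Pi.basisFun ℂ (Fin 3)) fun i j => ?_
  fin_cases i <;> fin_cases j <;> simp [m301Form_apply, *]

end IsMoufangCocycleOn

theorem eq_apply_single_of_forall_eq_smul_add_coboundary
    {θ : (Fin 3 → ℂ) →ₗ[ℂ] (Fin 3 → ℂ) →ₗ[ℂ] ℂ} {α : ℂ} {f : (Fin 3 → ℂ) →ₗ[ℂ] ℂ}
    (hf : ∀ x y, θ x y = α * (delta3 0 2 + delta3 1 1 + delta3 2 0) x y + f (m301mul x y)) :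
    α = θ (Pi.single 0 1) (Pi.single 2 1) := by
  simpa using (hf (Pi.single 0 1) (Pi.single 2 1)).symm

/-- Every Moufang cocycle on `M³₀₁` is uniquely of the form
`β₁Δ₁₁ + β₂(Δ₁₂ + Δ₂₁) + α(Δ₁₃ + Δ₂₂ + Δ₃₁)`; moreover, modulo coboundaries, every cocycle
is a unique scalar multiple of the class of `Δ₁₃ + Δ₂₂ + Δ₃₁`, i.e. `H²(M³₀₁,ℂ)` is
one-dimensional spanned by that class. -/
theorem m301_cocycle_decomposition (θ : (Fin 3 → ℂ) →ₗ[ℂ] (Fin 3 → ℂ) →ₗ[ℂ] ℂ)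
    (hθ : IsMoufangCocycleOn m301mul θ) :
    (∃! b : ℂ × ℂ × ℂ,
      θ = b.1 • delta3 0 0 + b.2.1 • (delta3 0 1 + delta3 1 0) +
        b.2.2 • (delta3 0 2 + delta3 1 1 + delta3 2 0)) ∧
    (∃! α : ℂ, ∃ f : (Fin 3 → ℂ) →ₗ[ℂ] ℂ,
      ∀ x y, θ x y = α * (delta3 0 2 + delta3 1 1 + delta3 2 0) x y + f (m301mul x y)) := by
  have hform := hθ.eq_m301Form
  refine ⟨⟨_, hform, fun b hb => m301Form_injective (hb.symm.trans hform)⟩, ⟨_, ?_,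
    fun α ⟨f, hf⟩ => eq_apply_single_of_forall_eq_smul_add_coboundary hf⟩⟩
  exact ⟨_, fun x y =>
    (LinearMap.congr_fun₂ hform x y).trans (m301Form_apply_eq_smul_add_coboundary _ x y)⟩
end

section
/- The 4-dimensional ℂ-algebra M⁴₀₁ with basis e₁, e₂, e₃, e₄ and multiplication determined bilinearly by e₁e₁ = e₂, e₁e₂ = e₃, e₂e₁ = e₃, e₁e₃ = e₄, e₂e₂ = e₄, e₃e₁ = e₄, and all other products of basis elements zero, satisfies all four Moufang identities, i.e. M⁴₀₁ is a Moufang algebra. -/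
/-!
With `eᵢ = tⁱ`, `M⁴₀₁` is the ideal `tℂ[t] / (t⁵)` of `ℂ[t] / (t⁵)`, so it is
associative; and every associative multiplication satisfies the Moufang identities, each of which
becomes a tautology once all products are reassociated.
-/

/-- The four Moufang identities for a binary multiplication `m` on an additive group. -/
def MoufangMulOn {B : Type*} [AddCommGroup B] (m : B → B → B) : Prop :=
  (∀ x y z, m (m x y) z - m x (m y z) = -(m (m z y) x - m z (m y x))) ∧
  (∀ x y z t, m (m (m x y) z) t + m (m (m z y) x) t = m x (m y (m z t)) + m z (m y (m x t))) ∧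
  (∀ x y z t, m t (m x (m y z)) + m t (m z (m y x)) = m (m (m t x) y) z + m (m (m t z) y) x) ∧
  (∀ x y z t, m (m x y) (m t z) + m (m z y) (m t x) = m (m x (m y t)) z + m (m z (m y t)) x)

/-- The multiplication of the algebra `M⁴₀₁` on `ℂ⁴` (basis `e₁,…,e₄` = coordinates `0,…,3`),
determined bilinearly by `e₁e₁ = e₂`, `e₁e₂ = e₃`, `e₂e₁ = e₃`, `e₁e₃ = e₄`, `e₂e₂ = e₄`,
`e₃e₁ = e₄`, all other products of basis vectors zero. -/
def m401mul (x y : Fin 4 → ℂ) : Fin 4 → ℂ :=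
  ![0, x 0 * y 0, x 0 * y 1 + x 1 * y 0, x 0 * y 2 + x 1 * y 1 + x 2 * y 0]

theorem MoufangMulOn.of_assoc {B : Type*} [AddCommGroup B] {m : B → B → B}
    (assoc : ∀ x y z, m (m x y) z = m x (m y z)) : MoufangMulOn m := by
  refine ⟨fun x y z => ?_, fun x y z t => ?_, fun x y z t => ?_, fun x y z t => ?_⟩ <;>
    simp only [assoc, sub_self, neg_zero]

theorem m401mul_assoc (x y z : Fin 4 → ℂ) :
    m401mul (m401mul x y) z = m401mul x (m401mul y z) := by
  funext i
  fin_cases i <;>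
    simp only [m401mul, Fin.isValue, Fin.zero_eta, Fin.mk_one, Fin.reduceFinMk, Matrix.cons_val,
      Matrix.cons_val_zero, Matrix.cons_val_one, zero_mul, mul_zero, zero_add, add_zero] <;>
    ring

/-- The algebra `M⁴₀₁` satisfies all four Moufang identities. -/
theorem m401_isMoufang : MoufangMulOn m401mul :=
  MoufangMulOn.of_assoc m401mul_assoc
end
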